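/- For the model knot complexes C₁ and C₂: Υ²_{C₁, 1}(s) = −2 for all s ∈ [0,2], while Υ²_{C₂, 1}(s) = −2 + s for s ∈ [0,1] and Υ²_{C₂, 1}(s) = −s for s ∈ [1,2]. In particular Υ_{C₁} = Υ_{C₂} but Υ²_{C₁,1} ≠ Υ²_{C₂,1}. -/

import Mathlib

open scoped BigOperators

/-- A "pre-complex": a finite distinguished basis `B`, a grading `gr`,
bifiltration functions `alg` and `alex`, and a differential recorded by its
matrix `d` over the field `F₂ = ZMod 2`:  `∂ x = ∑ y, d x y • y`. -/
structure PreComplex where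
  B : Type
  fB : Fintype B
  dB : DecidableEq B
  gr : B → ℤ
  alg : B → ℤ
  alex : B → ℤ
  d : B → B → ZMod 2

attribute [instance] PreComplex.fB PreComplex.dB

namespace PreComplex

variable (C : PreComplex)

/-- Chains: F₂-linear combinations of basis elements. -/
abbrev Chain : Type := C.B → ZMod 2

/-- The boundary of a chain, extending `∂ x = ∑ y, d x y • y` linearly. -/
def bdry (c : C.Chain) : C.Chain := fun y => ∑ x, c x * C.d x y

/-- A chain is homogeneous of grading `k`. -/
def isGraded (c : C.Chain) (k : ℤ) : Prop := ∀ x, c x ≠ 0 → C.gr x = k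

def isCycle (c : C.Chain) : Prop := C.bdry c = 0

def isBoundary (c : C.Chain) : Prop := ∃ w : C.Chain, C.bdry w = c

/-- A cycle of grading 0 representing the nonzero class of `H₀(C)`. -/
def GenCycle (z : C.Chain) : Prop :=
  C.isCycle z ∧ C.isGraded z 0 ∧ ¬ C.isBoundary z

/-- The bifiltration level of a basis element. -/
def lev (x : C.B) : ℤ × ℤ := (C.alg x, C.alex x)

/-- A model knot complex: `∂ ∘ ∂ = 0`; `∂` drops the grading by one and does
not increase either filtration; the homology is one dimensional, concentrated
in grading 0; and the minimum over cycles representing the generator of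
`H₀(C)` of their maximal `alg` (resp. `alex`) filtration level is 0. -/
def IsModel : Prop :=
  (∀ x z, (∑ y, C.d x y * C.d y z) = 0) ∧
  (∀ x y, C.d x y ≠ 0 → C.gr y = C.gr x - 1 ∧ C.alg y ≤ C.alg x ∧ C.alex y ≤ C.alex x) ∧
  (∀ k : ℤ, k ≠ 0 → ∀ z : C.Chain, C.isCycle z → C.isGraded z k → C.isBoundary z) ∧
  (∃ z : C.Chain, C.GenCycle z) ∧
  (∀ z z' : C.Chain, C.GenCycle z → C.GenCycle z' → C.isBoundary (z + z')) ∧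
  (∃ z : C.Chain, C.GenCycle z ∧ ∀ x, z x ≠ 0 → C.alg x ≤ 0) ∧
  (∀ z : C.Chain, C.GenCycle z → ∃ x, z x ≠ 0 ∧ 0 ≤ C.alg x) ∧
  (∃ z : C.Chain, C.GenCycle z ∧ ∀ x, z x ≠ 0 → C.alex x ≤ 0) ∧
  (∀ z : C.Chain, C.GenCycle z → ∃ x, z x ≠ 0 ∧ 0 ≤ C.alex x)

/-- An acyclic complex: conditions (i) and (ii) hold but the homology vanishes. -/
def IsAcyclic : Prop :=
  (∀ x z, (∑ y, C.d x y * C.d y z) = 0) ∧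
  (∀ x y, C.d x y ≠ 0 → C.gr y = C.gr x - 1 ∧ C.alg y ≤ C.alg x ∧ C.alex y ≤ C.alex x) ∧
  (∀ z : C.Chain, C.isCycle z → C.isBoundary z)

end PreComplex

/-- `f_t(i,j) = (t/2)·j + (1 − t/2)·i`. -/
noncomputable def fval (t : ℝ) (p : ℤ × ℤ) : ℝ :=
  (t / 2) * (p.2 : ℝ) + (1 - t / 2) * (p.1 : ℝ)

namespace PreComplex

variable (C : PreComplex)

/-- A chain lies in the subcomplex `F_{t,s}`. -/
def inF (t s : ℝ) (c : C.Chain) : Prop :=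
  ∀ x, c x ≠ 0 → fval t (C.lev x) ≤ s

/-- `γ_C(t)`: the minimal `s` such that `H₀(F_{t,s}) → H₀(C)` is surjective,
i.e. such that `F_{t,s}` contains a cycle representing the generator. -/
noncomputable def gamma (t : ℝ) : ℝ :=
  sInf {s : ℝ | ∃ z : C.Chain, C.GenCycle z ∧ C.inF t s z}

/-- The Upsilon invariant `Υ_C(t) = −2 γ_C(t)`. -/
noncomputable def Upsilon (t : ℝ) : ℝ := -2 * C.gamma t

/-- `P`: the set of bifiltration levels of basis elements. -/
def PSet : Set (ℤ × ℤ) := Set.range C.lev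

/-- `P_u = { p ∈ P : f_u(p) = γ_C(u) }`. -/
def Pt (u : ℝ) : Set (ℤ × ℤ) := {p ∈ C.PSet | fval u p = C.gamma u}

/-- `p` is the negative pivot point of `C` at `t`. -/
def IsNegPivot (t : ℝ) (p : ℤ × ℤ) : Prop :=
  ∃ δ₀ > (0 : ℝ), ∀ δ : ℝ, 0 < δ → δ < δ₀ → C.Pt (t - δ) ∩ C.Pt t = {p}

/-- `p` is the positive pivot point of `C` at `t`. -/
def IsPosPivot (t : ℝ) (p : ℤ × ℤ) : Prop :=
  ∃ δ₀ > (0 : ℝ), ∀ δ : ℝ, 0 < δ → δ < δ₀ → C.Pt (t + δ) ∩ C.Pt t = {p}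

/-- Cycles in `F_{t−δ, γ_C(t−δ)}` representing the nonzero class of `H₀(C)`. -/
def ZminusAt (t δ : ℝ) : Set C.Chain :=
  {z | C.GenCycle z ∧ C.inF (t - δ) (C.gamma (t - δ)) z}

/-- Cycles in `F_{t+δ, γ_C(t+δ)}` representing the nonzero class of `H₀(C)`. -/
def ZplusAt (t δ : ℝ) : Set C.Chain :=
  {z | C.GenCycle z ∧ C.inF (t + δ) (C.gamma (t + δ)) z}

/-- `Z⁻`: the (eventual, for all sufficiently small `δ > 0`) set of cycles in
`F_{t−δ, γ_C(t−δ)}` representing the nonzero class of `H₀(C)`. -/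
def Zminus (t : ℝ) : Set C.Chain :=
  {z | ∃ δ₀ > (0 : ℝ), ∀ δ : ℝ, 0 < δ → δ < δ₀ → z ∈ C.ZminusAt t δ}

/-- `Z⁺`: the (eventual, for all sufficiently small `δ > 0`) set of cycles in
`F_{t+δ, γ_C(t+δ)}` representing the nonzero class of `H₀(C)`. -/
def Zplus (t : ℝ) : Set C.Chain :=
  {z | ∃ δ₀ > (0 : ℝ), ∀ δ : ℝ, 0 < δ → δ < δ₀ → z ∈ C.ZplusAt t δ}

/-- A basis element lies in the subcomplex `F_{t,γ_C(t)} + F_{s,r}`. -/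
def inRegion (t s r : ℝ) (x : C.B) : Prop :=
  fval t (C.lev x) ≤ C.gamma t ∨ fval s (C.lev x) ≤ r

/-- `z` and `z'` represent the same homology class in `H₀(F_{t,γ_C(t)} + F_{s,r})`
(over F₂ the difference `z − z'` is `z + z'`). -/
def sameClass (t s r : ℝ) (z z' : C.Chain) : Prop :=
  (∀ x, z x ≠ 0 → C.inRegion t s r x) ∧
  (∀ x, z' x ≠ 0 → C.inRegion t s r x) ∧
  ∃ w : C.Chain, (∀ x, w x ≠ 0 → C.inRegion t s r x) ∧ C.bdry w = z + z'

/-- The set of `r` for which some `z⁻ ∈ Z⁻` and `z⁺ ∈ Z⁺` represent the same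
class in `H₀(F_{t,γ_C(t)} + F_{s,r})`. -/
def gamma2Set (t s : ℝ) : Set ℝ :=
  {r | ∃ zm ∈ C.Zminus t, ∃ zp ∈ C.Zplus t, C.sameClass t s r zm zp}

/-- `γ²_{C,t}(s)`, as an extended real: the minimum of `gamma2Set`
(`−∞` if the condition holds for every `r`). -/
noncomputable def gamma2 (t s : ℝ) : EReal :=
  sInf ((fun r : ℝ => (r : EReal)) '' C.gamma2Set t s)

/-- `Υ²_{C,t}(s) = −2 (γ²_{C,t}(s) − γ_C(t))`. -/
noncomputable def Upsilon2 (t s : ℝ) : EReal :=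
  (-2 : EReal) * (C.gamma2 t s - (C.gamma t : EReal))

end PreComplex

/-- The jump of the derivative of `f` at `t`: the right-hand derivative minus
the left-hand derivative. -/
noncomputable def derivJump (f : ℝ → ℝ) (t : ℝ) : ℝ :=
  derivWithin f (Set.Ici t) t - derivWithin f (Set.Iic t) t

/-- Direct sum of two pre-complexes. -/
def PreComplex.dsum (C A : PreComplex) : PreComplex where
  B := C.B ⊕ A.B
  fB := inferInstance
  dB := inferInstance
  gr := Sum.elim C.gr A.gr
  alg := Sum.elim C.alg A.alg
  alex := Sum.elim C.alex A.alex
  d := fun x y =>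
    match x, y with
    | Sum.inl x, Sum.inl y => C.d x y
    | Sum.inr x, Sum.inr y => A.d x y
    | _, _ => 0

/-- Tensor product of two pre-complexes. -/
def PreComplex.tensor (C₁ C₂ : PreComplex) : PreComplex where
  B := C₁.B × C₂.B
  fB := inferInstance
  dB := inferInstance
  gr := fun x => C₁.gr x.1 + C₂.gr x.2
  alg := fun x => C₁.alg x.1 + C₂.alg x.2
  alex := fun x => C₁.alex x.1 + C₂.alex x.2
  d := fun x y =>
    (if x.2 = y.2 then C₁.d x.1 y.1 else 0) + (if x.1 = y.1 then C₂.d x.2 y.2 else 0)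

/-- An isomorphism of pre-complexes: a bijection of the distinguished bases
preserving `gr`, `alg`, `alex`, whose linear extension commutes with the
differentials. -/
def PreComplex.Iso (C₁ C₂ : PreComplex) : Prop :=
  ∃ e : C₁.B ≃ C₂.B,
    (∀ x, C₂.gr (e x) = C₁.gr x) ∧
    (∀ x, C₂.alg (e x) = C₁.alg x) ∧
    (∀ x, C₂.alex (e x) = C₁.alex x) ∧
    (∀ x y, C₂.d (e x) (e y) = C₁.d x y)

/-- Stable equivalence of pre-complexes: isomorphism after adding acyclic
summands. -/
def PreComplex.StablyEquiv (C₁ C₂ : PreComplex) : Prop :=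
  ∃ A₁ A₂ : PreComplex, A₁.IsAcyclic ∧ A₂.IsAcyclic ∧ (C₁.dsum A₁).Iso (C₂.dsum A₂)

/-- The model complex `C₁` (for `T(4,5) # −T(2,3;2,5)`, modulo acyclics):
grading-0 generators `A₁, A₂` at levels (0,2), (2,0) and a grading-1
generator `B` at level (2,2) with `∂B = A₁ + A₂`. -/
def Cone : PreComplex where
  B := Fin 3
  fB := inferInstance
  dB := inferInstance
  gr := ![0, 0, 1]
  alg := ![0, 2, 2]
  alex := ![2, 0, 2]
  d := fun x y => if x.val = 2 ∧ (y.val = 0 ∨ y.val = 1) then 1 else 0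

/-- The model complex `C₂` (for `T(2,5)`): grading-0 generators `a₁,a₂,a₃`
at levels (0,2), (1,1), (2,0) and grading-1 generators `b₁,b₂` at levels
(1,2), (2,1), with `∂b₁ = a₁ + a₂`, `∂b₂ = a₂ + a₃`. -/
def Ctwo : PreComplex where
  B := Fin 5
  fB := inferInstance
  dB := inferInstance
  gr := ![0, 0, 0, 1, 1]
  alg := ![0, 1, 2, 1, 2]
  alex := ![2, 1, 0, 2, 1]
  d := fun x y =>
    if (x.val = 3 ∧ (y.val = 0 ∨ y.val = 1)) ∨ (x.val = 4 ∧ (y.val = 1 ∨ y.val = 2))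
    then 1 else 0

/-! In both complexes every grading-0 generator is on its own a cycle representing the
generator of `H₀`, and the generators at levels `(0,2)` and `(2,0)` give
`γ(t) = min(t, 2 - t)`. Near `t = 1` the minimum is attained only at `(0,2)` from the left and
only at `(2,0)` from the right, so `Z⁻` and `Z⁺` are single cycles, and their sum is `∂w` only
for chains `w` containing `B` (in `C₁`) resp. `b₁` and `b₂` (in `C₂`). These lie outside
`F_{1,γ(1)}`, so they must lie in `F_{s,r}`: `B` sits at `(2,2)`, where `f_s = 2` for every `s`,
while `b₁, b₂` sit at `(1,2)` and `(2,1)`, where `f_s` is `1 + s/2` and `2 - s/2`. -/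

open Set

lemma fval_mk (t : ℝ) (i j : ℤ) : fval t (i, j) = i + t / 2 * (j - i) := by
  rw [fval]; ring

lemma setOf_eventually_eq_singleton {α : Type*} {S : ℝ → Set α} {a : α} {ε : ℝ}
    (hε : 0 < ε) (h : ∀ δ, 0 < δ → δ < ε → S δ = {a}) :
    {z | ∃ δ₀ > (0 : ℝ), ∀ δ, 0 < δ → δ < δ₀ → z ∈ S δ} = {a} := by
  ext z
  constructor
  · rintro ⟨δ₀, hδ₀, hz⟩
    have hδ : 0 < min δ₀ ε / 2 := by positivity
    have hz' := hz _ hδ (by linarith [min_le_left δ₀ ε])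
    rwa [h _ hδ (by linarith [min_le_right δ₀ ε])] at hz'
  · rintro rfl
    exact ⟨ε, hε, fun δ hδ hδε => by rw [h δ hδ hδε]; rfl⟩

namespace PreComplex

variable {C : PreComplex}

lemma forall_single_ne_zero_iff {x : C.B} {P : C.B → Prop} :
    (∀ y, (Pi.single x 1 : C.Chain) y ≠ 0 → P y) ↔ P x := by
  refine ⟨fun h => h x (by simp), fun hx y hy => ?_⟩
  obtain rfl : y = x := by
    by_contra hne
    exact hy (Pi.single_eq_of_ne hne 1)
  exact hx

lemma inF_single_iff {t s : ℝ} {x : C.B} :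
    C.inF t s (Pi.single x 1) ↔ fval t (C.lev x) ≤ s :=
  forall_single_ne_zero_iff

lemma GenCycle.ne_zero {z : C.Chain} (hz : C.GenCycle z) : z ≠ 0 := by
  rintro rfl
  exact hz.2.2 ⟨0, by ext; simp [bdry]⟩

lemma gamma_eq_of_forall_single {t m : ℝ}
    (hsingle : ∀ x, C.gr x = 0 → C.GenCycle (Pi.single x 1))
    (hle : ∃ x, C.gr x = 0 ∧ fval t (C.lev x) ≤ m)
    (hge : ∀ x, C.gr x = 0 → m ≤ fval t (C.lev x)) :
    C.gamma t = m := by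
  refine IsLeast.csInf_eq ⟨?_, ?_⟩
  · obtain ⟨x, hx, hxm⟩ := hle
    exact ⟨_, hsingle x hx, inF_single_iff.2 hxm⟩
  · rintro s ⟨z, hz, hzs⟩
    obtain ⟨x, hx⟩ := Function.ne_iff.1 hz.ne_zero
    exact (hge x (hz.2.1 x hx)).trans (hzs x hx)

lemma Zminus_eq_singleton {t ε : ℝ} {z₀ : C.Chain} (hε : 0 < ε)
    (h : ∀ δ, 0 < δ → δ < ε → C.ZminusAt t δ = {z₀}) : C.Zminus t = {z₀} :=
  setOf_eventually_eq_singleton hε h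

lemma Zplus_eq_singleton {t ε : ℝ} {z₀ : C.Chain} (hε : 0 < ε)
    (h : ∀ δ, 0 < δ → δ < ε → C.ZplusAt t δ = {z₀}) : C.Zplus t = {z₀} :=
  setOf_eventually_eq_singleton hε h

lemma inRegion_iff_of_gamma_lt {t s r : ℝ} {x : C.B} (hx : C.gamma t < fval t (C.lev x)) :
    C.inRegion t s r x ↔ fval s (C.lev x) ≤ r :=
  or_iff_right hx.not_ge

lemma gamma2Set_eq_of_singletons {t s : ℝ} {zm zp : C.Chain}
    (hm : C.Zminus t = {zm}) (hp : C.Zplus t = {zp})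
    (hzm : C.inF t (C.gamma t) zm) (hzp : C.inF t (C.gamma t) zp) :
    C.gamma2Set t s =
      {r | ∃ w : C.Chain, (∀ x, w x ≠ 0 → C.inRegion t s r x) ∧ C.bdry w = zm + zp} := by
  simp only [gamma2Set, hm, hp, mem_singleton_iff, exists_eq_left, sameClass]
  ext r
  exact ⟨fun ⟨_, _, hw⟩ => hw,
    fun hw => ⟨fun x hx => Or.inl (hzm x hx), fun x hx => Or.inl (hzp x hx), hw⟩⟩

lemma Upsilon2_eq_of_gamma2Set_eq_Ici {t s m : ℝ} (h : C.gamma2Set t s = Ici m) :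
    C.Upsilon2 t s = ((-2 * (m - C.gamma t) : ℝ) : EReal) := by
  have hγ2 : C.gamma2 t s = m := by
    rw [gamma2, h]
    exact (EReal.coe_strictMono.monotone.map_isLeast isLeast_Ici).csInf_eq
  rw [Upsilon2, hγ2, ← EReal.coe_sub, show (-2 : EReal) = ((-2 : ℝ) : EReal) from rfl,
    ← EReal.coe_mul]

end PreComplex

open PreComplex

namespace Cone

def a₁ : Cone.B := (0 : Fin 3)
def a₂ : Cone.B := (1 : Fin 3)
def b : Cone.B := (2 : Fin 3)

lemma lev_a₁ : Cone.lev a₁ = (0, 2) := rfl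
lemma lev_a₂ : Cone.lev a₂ = (2, 0) := rfl
lemma lev_b : Cone.lev b = (2, 2) := rfl

lemma gr_eq_zero_iff (x : Cone.B) : Cone.gr x = 0 ↔ x = a₁ ∨ x = a₂ := by
  revert x
  unfold Cone a₁ a₂
  decide

lemma genCycle_iff (z : Cone.Chain) :
    Cone.GenCycle z ↔ z = Pi.single a₁ 1 ∨ z = Pi.single a₂ 1 := by
  revert z
  unfold GenCycle isCycle isGraded isBoundary bdry Cone a₁ a₂
  decide

lemma bdry_b : Cone.bdry (Pi.single b 1) = Pi.single a₁ 1 + Pi.single a₂ 1 := by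
  unfold bdry Cone a₁ a₂ b
  decide

lemma apply_b_ne_zero_of_bdry_eq (w : Cone.Chain)
    (hw : Cone.bdry w = Pi.single a₁ 1 + Pi.single a₂ 1) :
    w b ≠ 0 := by
  revert w
  unfold bdry Cone a₁ a₂ b
  decide

lemma gamma_eq (t : ℝ) : Cone.gamma t = min t (2 - t) := by
  refine gamma_eq_of_forall_single
    (fun x hx => (genCycle_iff _).2 (by rcases (gr_eq_zero_iff x).1 hx with rfl | rfl <;> simp))
    ?_ fun x hx => ?_
  · rcases le_total t (2 - t) with h | h
    · exact ⟨a₁, rfl, by rw [lev_a₁, fval_mk, min_eq_left h]; norm_num⟩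
    · exact ⟨a₂, rfl, by rw [lev_a₂, fval_mk, min_eq_right h]; norm_num⟩
  · rcases (gr_eq_zero_iff x).1 hx with rfl | rfl
    · rw [lev_a₁, fval_mk]; norm_num
    · rw [lev_a₂, fval_mk]; norm_num; linarith [min_le_right t (2 - t)]

lemma Zminus_one : Cone.Zminus 1 = {Pi.single a₁ 1} := by
  refine Zminus_eq_singleton one_pos fun δ hδ hδ1 => ?_
  ext z
  rw [ZminusAt, mem_ofPred_eq, mem_singleton_iff, gamma_eq, min_eq_left (by linarith)]
  constructor
  · rintro ⟨hz, hzF⟩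
    refine ((genCycle_iff z).1 hz).resolve_right ?_
    rintro rfl
    rw [inF_single_iff, lev_a₂, fval_mk] at hzF
    norm_num at hzF
    linarith
  · rintro rfl
    refine ⟨(genCycle_iff _).2 (Or.inl rfl), inF_single_iff.2 ?_⟩
    rw [lev_a₁, fval_mk]; norm_num

lemma Zplus_one : Cone.Zplus 1 = {Pi.single a₂ 1} := by
  refine Zplus_eq_singleton one_pos fun δ hδ hδ1 => ?_
  ext z
  rw [ZplusAt, mem_ofPred_eq, mem_singleton_iff, gamma_eq, min_eq_right (by linarith)]
  constructor
  · rintro ⟨hz, hzF⟩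
    refine ((genCycle_iff z).1 hz).resolve_left ?_
    rintro rfl
    rw [inF_single_iff, lev_a₁, fval_mk] at hzF
    norm_num at hzF
    linarith
  · rintro rfl
    refine ⟨(genCycle_iff _).2 (Or.inr rfl), inF_single_iff.2 ?_⟩
    rw [lev_a₂, fval_mk]; push_cast; linarith

lemma gamma2Set_one (s : ℝ) : Cone.gamma2Set 1 s = Ici 2 := by
  have hγ : Cone.gamma 1 = 1 := by rw [gamma_eq]; norm_num
  have hb : Cone.gamma 1 < fval 1 (Cone.lev b) := by rw [hγ, lev_b, fval_mk]; norm_num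
  have hfb : fval s (Cone.lev b) = 2 := by rw [lev_b, fval_mk]; norm_num
  rw [gamma2Set_eq_of_singletons Zminus_one Zplus_one
    (inF_single_iff.2 (by rw [hγ, lev_a₁, fval_mk]; norm_num))
    (inF_single_iff.2 (by rw [hγ, lev_a₂, fval_mk]; norm_num))]
  ext r
  rw [mem_ofPred_eq, mem_Ici, ← hfb, ← inRegion_iff_of_gamma_lt hb]
  exact ⟨fun ⟨w, hw, hbw⟩ => hw b (apply_b_ne_zero_of_bdry_eq w hbw),
    fun hr => ⟨Pi.single b 1, forall_single_ne_zero_iff.2 hr, bdry_b⟩⟩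

lemma Upsilon2_one (s : ℝ) : Cone.Upsilon2 1 s = ((-2 : ℝ) : EReal) := by
  rw [Upsilon2_eq_of_gamma2Set_eq_Ici (gamma2Set_one s), gamma_eq]
  norm_num

end Cone

namespace Ctwo

def a₁ : Ctwo.B := (0 : Fin 5)
def a₂ : Ctwo.B := (1 : Fin 5)
def a₃ : Ctwo.B := (2 : Fin 5)
def b₁ : Ctwo.B := (3 : Fin 5)
def b₂ : Ctwo.B := (4 : Fin 5)

lemma lev_a₁ : Ctwo.lev a₁ = (0, 2) := rfl
lemma lev_a₂ : Ctwo.lev a₂ = (1, 1) := rfl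
lemma lev_a₃ : Ctwo.lev a₃ = (2, 0) := rfl
lemma lev_b₁ : Ctwo.lev b₁ = (1, 2) := rfl
lemma lev_b₂ : Ctwo.lev b₂ = (2, 1) := rfl

lemma gr_eq_zero_iff (x : Ctwo.B) : Ctwo.gr x = 0 ↔ x = a₁ ∨ x = a₂ ∨ x = a₃ := by
  revert x
  unfold Ctwo a₁ a₂ a₃
  decide

lemma genCycle_iff (z : Ctwo.Chain) :
    Ctwo.GenCycle z ↔ z = Pi.single a₁ 1 ∨ z = Pi.single a₂ 1 ∨ z = Pi.single a₃ 1 ∨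
      z = Pi.single a₁ 1 + Pi.single a₂ 1 + Pi.single a₃ 1 := by
  revert z
  unfold GenCycle isCycle isGraded isBoundary bdry Ctwo a₁ a₂ a₃
  decide

lemma bdry_b₁_add_b₂ :
    Ctwo.bdry (Pi.single b₁ 1 + Pi.single b₂ 1) = Pi.single a₁ 1 + Pi.single a₃ 1 := by
  unfold bdry Ctwo a₁ a₃ b₁ b₂
  decide

lemma apply_b₁_b₂_ne_zero_of_bdry_eq (w : Ctwo.Chain)
    (hw : Ctwo.bdry w = Pi.single a₁ 1 + Pi.single a₃ 1) : w b₁ ≠ 0 ∧ w b₂ ≠ 0 := by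
  revert w
  unfold bdry Ctwo a₁ a₃ b₁ b₂
  decide

lemma gamma_eq (t : ℝ) : Ctwo.gamma t = min t (2 - t) := by
  refine gamma_eq_of_forall_single
    (fun x hx => (genCycle_iff _).2 <| by
      rcases (gr_eq_zero_iff x).1 hx with rfl | rfl | rfl <;> simp)
    ?_ fun x hx => ?_
  · rcases le_total t (2 - t) with h | h
    · exact ⟨a₁, rfl, by rw [lev_a₁, fval_mk, min_eq_left h]; norm_num⟩
    · exact ⟨a₃, rfl, by rw [lev_a₃, fval_mk, min_eq_right h]; norm_num⟩
  · rcases (gr_eq_zero_iff x).1 hx with rfl | rfl | rfl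
    · rw [lev_a₁, fval_mk]; norm_num
    · rw [lev_a₂, fval_mk]; norm_num
      exact (le_total t 1).imp id fun h => by linarith
    · rw [lev_a₃, fval_mk]; norm_num; linarith [min_le_right t (2 - t)]

lemma Zminus_one : Ctwo.Zminus 1 = {Pi.single a₁ 1} := by
  refine Zminus_eq_singleton one_pos fun δ hδ hδ1 => ?_
  ext z
  rw [ZminusAt, mem_ofPred_eq, mem_singleton_iff, gamma_eq, min_eq_left (by linarith)]
  have ha₂ : ¬ fval (1 - δ) (Ctwo.lev a₂) ≤ 1 - δ := by
    rw [lev_a₂, fval_mk]; norm_num; linarith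
  have ha₃ : ¬ fval (1 - δ) (Ctwo.lev a₃) ≤ 1 - δ := by
    rw [lev_a₃, fval_mk]; norm_num; linarith
  constructor
  · rintro ⟨hz, hzF⟩
    rcases (genCycle_iff z).1 hz with rfl | rfl | rfl | rfl
    · rfl
    · exact absurd (hzF a₂ (by decide)) ha₂
    · exact absurd (hzF a₃ (by decide)) ha₃
    · exact absurd (hzF a₂ (by decide)) ha₂
  · rintro rfl
    refine ⟨(genCycle_iff _).2 (Or.inl rfl), inF_single_iff.2 ?_⟩
    rw [lev_a₁, fval_mk]; norm_num

lemma Zplus_one : Ctwo.Zplus 1 = {Pi.single a₃ 1} := by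
  refine Zplus_eq_singleton one_pos fun δ hδ hδ1 => ?_
  ext z
  rw [ZplusAt, mem_ofPred_eq, mem_singleton_iff, gamma_eq, min_eq_right (by linarith)]
  have ha₁ : ¬ fval (1 + δ) (Ctwo.lev a₁) ≤ 2 - (1 + δ) := by
    rw [lev_a₁, fval_mk]; norm_num; linarith
  have ha₂ : ¬ fval (1 + δ) (Ctwo.lev a₂) ≤ 2 - (1 + δ) := by
    rw [lev_a₂, fval_mk]; norm_num; linarith
  constructor
  · rintro ⟨hz, hzF⟩
    rcases (genCycle_iff z).1 hz with rfl | rfl | rfl | rfl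
    · exact absurd (hzF a₁ (by decide)) ha₁
    · exact absurd (hzF a₂ (by decide)) ha₂
    · rfl
    · exact absurd (hzF a₁ (by decide)) ha₁
  · rintro rfl
    refine ⟨(genCycle_iff _).2 (Or.inr (Or.inr (Or.inl rfl))), inF_single_iff.2 ?_⟩
    rw [lev_a₃, fval_mk]; push_cast; linarith

lemma gamma2Set_one (s : ℝ) : Ctwo.gamma2Set 1 s = Ici (max (1 + s / 2) (2 - s / 2)) := by
  have hγ : Ctwo.gamma 1 = 1 := by rw [gamma_eq]; norm_num
  have hb₁ : Ctwo.gamma 1 < fval 1 (Ctwo.lev b₁) := by rw [hγ, lev_b₁, fval_mk]; norm_num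
  have hb₂ : Ctwo.gamma 1 < fval 1 (Ctwo.lev b₂) := by rw [hγ, lev_b₂, fval_mk]; norm_num
  have hfb₁ : fval s (Ctwo.lev b₁) = 1 + s / 2 := by rw [lev_b₁, fval_mk]; push_cast; ring
  have hfb₂ : fval s (Ctwo.lev b₂) = 2 - s / 2 := by rw [lev_b₂, fval_mk]; push_cast; ring
  rw [gamma2Set_eq_of_singletons Zminus_one Zplus_one
    (inF_single_iff.2 (by rw [hγ, lev_a₁, fval_mk]; norm_num))
    (inF_single_iff.2 (by rw [hγ, lev_a₃, fval_mk]; norm_num))]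
  ext r
  rw [mem_ofPred_eq, mem_Ici, max_le_iff, ← hfb₁, ← hfb₂,
    ← inRegion_iff_of_gamma_lt hb₁, ← inRegion_iff_of_gamma_lt hb₂]
  constructor
  · rintro ⟨w, hw, hbw⟩
    obtain ⟨h₁, h₂⟩ := apply_b₁_b₂_ne_zero_of_bdry_eq w hbw
    exact ⟨hw b₁ h₁, hw b₂ h₂⟩
  · rintro ⟨h₁, h₂⟩
    refine ⟨Pi.single b₁ 1 + Pi.single b₂ 1, fun x hx => ?_, bdry_b₁_add_b₂⟩
    rcases Function.support_add (Pi.single b₁ (1 : ZMod 2)) (Pi.single b₂ 1) hx with hx | hx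
    · rwa [mem_singleton_iff.1 (Pi.support_single_subset hx)]
    · rwa [mem_singleton_iff.1 (Pi.support_single_subset hx)]

lemma Upsilon2_one (s : ℝ) :
    Ctwo.Upsilon2 1 s = ((-2 * (max (1 + s / 2) (2 - s / 2) - 1) : ℝ) : EReal) := by
  rw [Upsilon2_eq_of_gamma2Set_eq_Ici (gamma2Set_one s), gamma_eq]
  norm_num

end Ctwo

/-- `Υ²_{C₁,1}(s) = −2` for all `s ∈ [0,2]`, while
`Υ²_{C₂,1}(s) = −2 + s` on `[0,1]` and `= −s` on `[1,2]`; in particular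
`Υ_{C₁} = Υ_{C₂}` but `Υ²_{C₁,1} ≠ Υ²_{C₂,1}`. -/
theorem upsilon2_Cone_Ctwo :
    (∀ s ∈ Set.Icc (0 : ℝ) 2, Cone.Upsilon2 1 s = ((-2 : ℝ) : EReal)) ∧
    (∀ s ∈ Set.Icc (0 : ℝ) 1, Ctwo.Upsilon2 1 s = ((-2 + s : ℝ) : EReal)) ∧
    (∀ s ∈ Set.Icc (1 : ℝ) 2, Ctwo.Upsilon2 1 s = ((-s : ℝ) : EReal)) ∧
    (∀ t ∈ Set.Icc (0 : ℝ) 2, Cone.Upsilon t = Ctwo.Upsilon t) ∧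
    (fun s : ℝ => Cone.Upsilon2 1 s) ≠ (fun s : ℝ => Ctwo.Upsilon2 1 s) := by
  refine ⟨fun s _ => Cone.Upsilon2_one s, fun s hs => ?_, fun s hs => ?_,
    fun t _ => by rw [Upsilon, Upsilon, Cone.gamma_eq, Ctwo.gamma_eq], fun h => ?_⟩
  · rw [Ctwo.Upsilon2_one, max_eq_right (by linarith [hs.2])]
    congr 1
    ring
  · rw [Ctwo.Upsilon2_one, max_eq_left (by linarith [hs.1])]
    congr 1
    ring
  · have h₁ := congrFun h 1
    rw [Cone.Upsilon2_one, Ctwo.Upsilon2_one, EReal.coe_eq_coe_iff] at h₁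
    norm_num at h₁
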